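/- Let X be a zero-dimensional Polish space which is not locally compact and whose derived set X' (the set of non-isolated points) is compact. Then the open subgroup H = {f ∈ C_k(X,2) : f ≡ 0 on X'} is homeomorphic to the subgroup {g ∈ C_k(M,2) : g(∞) = 0} of C_k(M,2), where M is the countable metric fan; in particular C_k(X,2) is sequential. -/

import Mathlib

/-!
Let `X'` be the compact set of non-isolated points. Since `X` is metrizable, `𝓝ˢ X'` has an
antitone basis `V`, and since `X` is not locally compact it can be chosen with every layer
`V n \ V (n + 1)` infinite; the layers are countable sets of isolated points. Enumerating the
`n`-th layer as the `n`-th column of `ω × ω` and sending `X'` to `∞` gives a proper surjection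
`X → M`. Precomposition with a proper surjection is an embedding of function spaces, and this one
carries `{g | g ∞ = 0}` onto `H`.

`C_k(M, 2)` is sequential by a diagonal argument. The maps agreeing with a fixed `g₀` on the tail
`U(n)` form a compact metrizable set, so a sequentially closed `F ∌ g₀` meets it in a compact set,
which is avoided by agreeing with `g₀` at finitely many points of column `n`. Collected over all
`n`, these points and `∞` form a compact set on which agreement with `g₀` keeps a map out of `F`.
Finally `H` is an open subgroup of `C_k(X, 2)`.
-/

open Filter Topology

/-- The countable metric fan `M = (ω × ω) ∪ {∞}`; `none` plays the role of `∞`. -/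
def Fan : Type := Option (ℕ × ℕ)

/-- The basic neighborhood `U(n) = {∞} ∪ ((ω \ n) × ω)` of `∞`. -/
def fanU (n : ℕ) : Set Fan := {x | x = none ∨ ∃ p : ℕ × ℕ, x = some p ∧ n ≤ p.1}

/-- The fan topology: points of `ω × ω` are isolated and the sets `U(n)` are
basic neighborhoods of `∞`. -/
instance : TopologicalSpace Fan :=
  TopologicalSpace.generateFrom
    ({V | ∃ p : ℕ × ℕ, V = {some p}} ∪ {V | ∃ n : ℕ, V = fanU n})

open Set Function

section General

variable {X Y : Type*} [TopologicalSpace X] [TopologicalSpace Y]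

theorem isDiscrete_of_isOpen_singleton {s : Set X} (h : ∀ x ∈ s, IsOpen ({x} : Set X)) :
    IsDiscrete s :=
  isDiscrete_iff_forall_mem_exists_isOpen.2 fun x hx => ⟨{x}, h x hx, singleton_inter_of_mem hx⟩

theorem continuousAt_of_isOpen_singleton {f : X → Y} {x : X} (hx : IsOpen ({x} : Set X)) :
    ContinuousAt f x := by
  rw [ContinuousAt, (isOpen_singleton_iff_nhds_eq_pure x).1 hx]
  exact tendsto_pure_nhds f x

theorem isCompact_of_finite_diff {K S : Set X} (hK : IsCompact K) (hKS : K ⊆ S)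
    (h : ∀ U, IsOpen U → K ⊆ U → (S \ U).Finite) : IsCompact S := by
  classical
  refine isCompact_of_finite_subcover fun U hU hcover => ?_
  obtain ⟨t, ht⟩ := hK.elim_finite_subcover U hU (hKS.trans hcover)
  obtain ⟨t', ht'⟩ := (h _ (isOpen_biUnion fun i _ => hU i) ht).isCompact.elim_finite_subcover
    U hU (sdiff_subset.trans hcover)
  refine ⟨t ∪ t', fun x hx => ?_⟩
  by_cases hxt : x ∈ ⋃ i ∈ t, U i
  · exact biUnion_subset_biUnion_left (by simp) hxt
  · exact biUnion_subset_biUnion_left (by simp) (ht' ⟨hx, hxt⟩)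

theorem Topology.IsClosedEmbedding.sequentialSpace [SequentialSpace Y] {f : X → Y}
    (hf : IsClosedEmbedding f) : SequentialSpace X := by
  refine ⟨fun s hs => ?_⟩
  have hseq : IsSeqClosed (f '' s) := by
    intro u y hu hy
    choose x hxs hx using hu
    obtain ⟨y, rfl⟩ : y ∈ range f := hf.isClosed_range.isSeqClosed (fun n => ⟨x n, hx n⟩) hy
    refine ⟨y, hs hxs (hf.tendsto_nhds_iff.2 ?_), rfl⟩
    simpa [Function.comp_def, hx] using hy
  simpa [hf.injective.preimage_image] using hseq.isClosed.preimage hf.continuous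

@[to_additive]
theorem IsTopologicalGroup.sequentialSpace_of_isOpen {G : Type*} [TopologicalSpace G] [Group G]
    [IsTopologicalGroup G] {U : Set G} (hU : IsOpen U) (h1 : (1 : G) ∈ U) [SequentialSpace U] :
    SequentialSpace G := by
  refine ⟨fun F hF => isOpen_compl_iff.1 <| isOpen_iff_mem_nhds.2 fun g hg => ?_⟩
  have hF' : IsSeqClosed (((↑) : U → G) ⁻¹' ((g * ·) ⁻¹' F)) :=
    (hF.preimage (continuous_const_mul g).seqContinuous).preimage
      continuous_subtype_val.seqContinuous
  have hO := hU.isOpenMap_subtype_val _ hF'.isClosed.isOpen_compl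
  have hg1 : Tendsto (g⁻¹ * ·) (𝓝 g) (𝓝 1) := (continuous_const_mul g⁻¹).tendsto' g 1 (by simp)
  filter_upwards [hg1.eventually (hO.mem_nhds ⟨⟨1, h1⟩, by simpa using hg, rfl⟩)]
    with y ⟨u, hu, hyu⟩ hy
  exact hu (by simpa [hyu] using hy)

theorem IsCompact.isCountablyGenerated_nhdsSet [TopologicalSpace.PseudoMetrizableSpace X]
    {K : Set X} (hK : IsCompact K) : (𝓝ˢ K).IsCountablyGenerated := by
  let := TopologicalSpace.pseudoMetrizableSpaceUniformity X
  have := TopologicalSpace.pseudoMetrizableSpaceUniformity_countably_generated X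
  obtain ⟨V, hV⟩ := (uniformity X).exists_antitone_basis
  exact (hK.nhdsSet_basis_uniformity hV.toHasBasis).isCountablyGenerated

theorem exists_equiv_prod_nat_fst_eq {α β : Type*} [Countable α] (ℓ : α → β)
    (hℓ : ∀ b, (ℓ ⁻¹' {b}).Infinite) : ∃ e : α ≃ β × ℕ, ∀ a, (e a).1 = ℓ a := by
  have fiber (b : β) : {a // ℓ a = b} ≃ ℕ :=
    haveI : Infinite {a // ℓ a = b} := (hℓ b).to_subtype
    letI := Classical.choice (nonempty_denumerable {a // ℓ a = b})
    Denumerable.eqv _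
  exact ⟨(Equiv.sigmaFiberEquiv ℓ).symm.trans
    ((Equiv.sigmaCongrRight fiber).trans (Equiv.sigmaEquivProd β ℕ)), fun a => rfl⟩

end General

namespace ContinuousMap

variable {X Y : Type*} [TopologicalSpace X] [TopologicalSpace Y]

theorem isClosed_setOf_eqOn [T2Space Y] (g : C(X, Y)) (s : Set X) :
    IsClosed {h : C(X, Y) | EqOn h g s} := by
  simp only [EqOn, ofPred_forall]
  exact isClosed_biInter fun x _ => isClosed_eq (continuous_eval_const x) continuous_const

theorem isOpen_setOf_eqOn [DiscreteTopology Y] (g : C(X, Y)) {K : Set X} (hK : IsCompact K) :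
    IsOpen {h : C(X, Y) | EqOn h g K} := by
  have : {h : C(X, Y) | EqOn h g K} =
      ⋂ y ∈ g '' K, {h : C(X, Y) | MapsTo h (K ∩ g ⁻¹' {y}) {y}} := by
    ext h
    simp only [EqOn, MapsTo, mem_iInter, mem_ofPred_eq, forall_mem_image, mem_inter_iff,
      mem_preimage, mem_singleton_iff]
    exact ⟨fun H _ _ _ hy => hy.2 ▸ H hy.1, fun H x hx => H hx ⟨hx, rfl⟩⟩
  rw [this]
  exact (hK.image g.continuous).finite_of_discrete.isOpen_biInter fun y _ =>
    isOpen_setOfPred_mapsTo (hK.inter_right ((isClosed_discrete _).preimage g.continuous))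
      (isOpen_discrete _)

end ContinuousMap

section Precomp

variable {X Y Z : Type*} [TopologicalSpace X] [TopologicalSpace Y] [TopologicalSpace Z]

theorem IsProperMap.isEmbedding_precomp {q : C(X, Y)} (hq : IsProperMap q)
    (hsurj : Surjective q) : IsEmbedding (fun g : C(Y, Z) => g.comp q) := by
  refine ⟨⟨le_antisymm (ContinuousMap.continuous_precomp q).le_induced ?_⟩, fun g g' h => ?_⟩
  · refine le_generateFrom ?_
    rintro _ ⟨K, hK, U, hU, rfl⟩
    have : {g : C(Y, Z) | MapsTo g K U} =
        (fun g : C(Y, Z) => g.comp q) ⁻¹' {f | MapsTo f (q ⁻¹' K) U} := by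
      ext g
      simp [← mapsTo_image_iff, image_preimage_eq K hsurj]
    dsimp only
    rw [this]
    exact isOpen_induced (ContinuousMap.isOpen_setOfPred_mapsTo (hq.isCompact_preimage hK) hU)
  · ext y
    obtain ⟨x, rfl⟩ := hsurj y
    exact DFunLike.congr_fun h x

noncomputable def IsProperMap.precompHomeomorph {q : C(X, Y)} (hq : IsProperMap q)
    (hsurj : Surjective q) (y₀ : Y) (z₀ : Z) (hinj : ∀ x x', q x = q x' → q x ≠ y₀ → x = x') :
    {g : C(Y, Z) | g y₀ = z₀} ≃ₜ {f : C(X, Z) | ∀ x, q x = y₀ → f x = z₀} :=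
  have hemb := hq.isEmbedding_precomp (Z := Z) hsurj
  have hquot := hq.isClosedMap.isQuotientMap q.continuous hsurj
  let Φ (g : {g : C(Y, Z) | g y₀ = z₀}) : {f : C(X, Z) | ∀ x, q x = y₀ → f x = z₀} :=
    ⟨g.1.comp q, fun x hx => by rw [ContinuousMap.comp_apply, hx]; exact g.2⟩
  have hΦ : Surjective Φ := fun f => by
    have hfac : FactorsThrough f.1 q := fun x x' h => by
      by_cases hx : q x = y₀
      · rw [f.2 x hx, f.2 x' (h ▸ hx)]
      · rw [hinj x x' h hx]
    refine ⟨⟨hquot.lift f.1 hfac, ?_⟩, Subtype.ext (hquot.lift_comp f.1 hfac)⟩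
    obtain ⟨x, rfl⟩ := hsurj y₀
    exact (DFunLike.congr_fun (hquot.lift_comp f.1 hfac) x).trans (f.2 x rfl)
  (Equiv.ofBijective Φ ⟨fun g g' h => Subtype.ext (hemb.injective (congrArg Subtype.val h)),
    hΦ⟩).toHomeomorphOfIsInducing
    (IsInducing.subtypeVal.of_comp_iff.1 (hemb.isInducing.comp IsInducing.subtypeVal))

end Precomp

namespace Fan

variable {Y : Type*} [TopologicalSpace Y]

instance : Countable Fan := inferInstanceAs (Countable (Option (ℕ × ℕ)))

theorem none_mem_fanU (n : ℕ) : (none : Fan) ∈ fanU n := Or.inl rfl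

theorem some_mem_fanU {p : ℕ × ℕ} {n : ℕ} : (some p : Fan) ∈ fanU n ↔ n ≤ p.1 := by
  refine ⟨fun h => ?_, fun h => Or.inr ⟨p, rfl, h⟩⟩
  rcases h with h | ⟨q, hq, hn⟩
  · exact absurd h (Option.some_ne_none p)
  · rwa [Option.some_inj.1 hq]

theorem fanU_zero : fanU 0 = univ :=
  eq_univ_of_forall fun z => match z with
    | none => none_mem_fanU 0
    | some _ => some_mem_fanU.2 (Nat.zero_le _)

theorem fanU_antitone : Antitone fanU := fun _ _ hmn z hz => match z, hz with
  | none, _ => none_mem_fanU _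
  | some _, hz => some_mem_fanU.2 (hmn.trans (some_mem_fanU.1 hz))

theorem mem_fanU_succ_or {n : ℕ} {z : Fan} (hz : z ∈ fanU n) :
    z ∈ fanU (n + 1) ∨ ∃ j, z = some (n, j) := by
  rcases hz with rfl | ⟨⟨m, j⟩, rfl, hm⟩
  · exact Or.inl (none_mem_fanU _)
  · rcases hm.eq_or_lt with rfl | hlt
    · exact Or.inr ⟨j, rfl⟩
    · exact Or.inl (some_mem_fanU.2 hlt)

theorem isOpen_singleton_some (p : ℕ × ℕ) : IsOpen ({some p} : Set Fan) :=
  TopologicalSpace.isOpen_generateFrom_of_mem (Or.inl ⟨p, rfl⟩)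

theorem isOpen_fanU (n : ℕ) : IsOpen (fanU n) :=
  TopologicalSpace.isOpen_generateFrom_of_mem (Or.inr ⟨n, rfl⟩)

theorem hasAntitoneBasis_nhds_none : (@nhds Fan _ none).HasAntitoneBasis fanU := by
  suffices @nhds Fan _ none = ⨅ n, 𝓟 (fanU n) from this ▸ .iInf_principal fanU_antitone
  refine TopologicalSpace.nhds_generateFrom.trans (le_antisymm ?_ ?_)
  · exact le_iInf fun n => iInf₂_le (fanU n) ⟨none_mem_fanU n, Or.inr ⟨n, rfl⟩⟩
  · refine le_iInf₂ fun s ⟨hs, hg⟩ => ?_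
    rcases hg with ⟨p, rfl⟩ | ⟨n, rfl⟩
    · exact absurd (mem_singleton_iff.1 hs) (Option.some_ne_none p).symm
    · exact iInf_le _ n

theorem continuous_iff_continuousAt_none {f : Fan → Y} : Continuous f ↔ ContinuousAt f none := by
  refine ⟨fun hf => hf.continuousAt, fun hf => continuous_iff_continuousAt.2 fun z => ?_⟩
  match z with
  | none => exact hf
  | some p => exact continuousAt_of_isOpen_singleton (isOpen_singleton_some p)

variable (g₀ : C(Fan, Y))

open scoped Classical in
noncomputable def patch (n : ℕ) (u : Fan → Y) : C(Fan, Y) :=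
  ⟨(fanU n).piecewise g₀ u, continuous_iff_continuousAt_none.2 <|
    g₀.continuous.continuousAt.congr <| mem_of_superset ((isOpen_fanU n).mem_nhds
      (none_mem_fanU n)) fun _ hz => (piecewise_eq_of_mem _ _ _ hz).symm⟩

theorem range_patch (n : ℕ) : range (patch g₀ n) = {h : C(Fan, Y) | EqOn h g₀ (fanU n)} := by
  ext h
  refine ⟨?_, fun hh => ⟨h, ContinuousMap.ext fun z => ?_⟩⟩
  · rintro ⟨u, rfl⟩ z hz
    simp [patch, hz]
  · by_cases hz : z ∈ fanU n
    · simp [patch, hz, hh hz]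
    · simp [patch, hz]

variable [DiscreteTopology Y]

theorem exists_eqOn_fanU (h g : C(Fan, Y)) (hnone : h none = g none) :
    ∃ n, EqOn h g (fanU n) := by
  have : ∀ᶠ z in @nhds Fan _ none, h z = g z := by
    filter_upwards [((IsLocallyConstant.iff_continuous h).2 h.continuous).eventually_eq none,
      ((IsLocallyConstant.iff_continuous g).2 g.continuous).eventually_eq none] with z hz gz
    rw [hz, gz, hnone]
  exact hasAntitoneBasis_nhds_none.mem_iff.1 this

theorem isCompact_insert_none {S : Set (ℕ × ℕ)} (hS : ∀ m, {j | (m, j) ∈ S}.Finite) :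
    IsCompact (insert none (some '' S) : Set Fan) := by
  refine isCompact_of_finite_diff isCompact_singleton (singleton_subset_iff.2 (mem_insert _ _))
    fun U hU hnone => ?_
  obtain ⟨n, hn⟩ := hasAntitoneBasis_nhds_none.mem_iff.1 (hU.mem_nhds (hnone rfl))
  have hfin : {p ∈ S | p.1 < n}.Finite :=
    ((finite_Iio n).biUnion fun m _ => (hS m).image (Prod.mk m)).subset <| by
      rintro ⟨m, j⟩ ⟨hmj, hm⟩
      exact mem_biUnion hm ⟨j, hmj, rfl⟩
  refine (hfin.image some).subset ?_
  rintro z ⟨rfl | ⟨p, hp, rfl⟩, hzU⟩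
  · exact absurd (hn (none_mem_fanU n)) hzU
  · exact ⟨p, ⟨hp, not_le.1 fun h => hzU (hn (some_mem_fanU.2 h))⟩, rfl⟩

theorem finite_diff_fanU {K : Set Fan} (hK : IsCompact K) (n : ℕ) : (K \ fanU n).Finite :=
  (hK.diff (isOpen_fanU n)).finite <| isDiscrete_of_isOpen_singleton fun z hz => match z, hz with
    | none, hz => absurd (none_mem_fanU n) hz.2
    | some p, _ => isOpen_singleton_some p

theorem continuous_patch (n : ℕ) : Continuous (patch g₀ n) := by
  refine ContinuousMap.continuous_compactOpen.2 fun K hK U _ =>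
    isOpen_iff_mem_nhds.2 fun u hu => ?_
  have hagree : ∀ᶠ u' in 𝓝 u, ∀ z ∈ K \ fanU n, u' z = u z :=
    (finite_diff_fanU hK n).eventually_all.2 fun z _ =>
      ((IsLocallyConstant.iff_continuous _).2 (continuous_apply z)).eventually_eq u
  filter_upwards [hagree] with u' hu' z hz
  by_cases hzn : z ∈ fanU n
  · simpa [patch, hzn] using hu hz
  · simpa [patch, hzn, hu' z ⟨hz, hzn⟩] using hu hz

variable [Finite Y]

theorem isCompact_inter_eqOn_fanU {F : Set C(Fan, Y)} (hF : IsSeqClosed F) (n : ℕ) :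
    IsCompact (F ∩ {h : C(Fan, Y) | EqOn h g₀ (fanU n)}) := by
  rw [← range_patch, ← image_preimage_eq_inter_range]
  exact (hF.preimage (continuous_patch g₀ n).seqContinuous).isClosed.isCompact.image
    (continuous_patch g₀ n)

theorem exists_finset_disjoint_succ {F : Set C(Fan, Y)} (hF : IsSeqClosed F) {n : ℕ}
    {T : Set (ℕ × ℕ)} (hT : Disjoint F {h | EqOn h g₀ (fanU n ∪ some '' T)}) :
    ∃ A : Finset ℕ,
      Disjoint F {h | EqOn h g₀ (fanU (n + 1) ∪ some '' (T ∪ Prod.mk n '' A))} := by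
  set C := F ∩ {h | EqOn h g₀ (fanU (n + 1))} ∩ {h | EqOn h g₀ (some '' T)}
  have hC : IsCompact C :=
    (isCompact_inter_eqOn_fanU g₀ hF (n + 1)).inter_right (g₀.isClosed_setOf_eqOn _)
  -- a member of `C` agreeing with `g₀` on column `n` would contradict `hT`
  have hcover : C ⊆ ⋃ j, {h | h (some (n, j)) ≠ g₀ (some (n, j))} := by
    rintro h ⟨⟨hhF, htail⟩, hhT⟩
    by_contra hcol
    simp only [mem_iUnion, mem_ofPred_eq, not_exists, not_not] at hcol
    refine hT.ne_of_mem hhF (fun z hz => ?_) rfl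
    rcases hz with hz | hz
    · rcases mem_fanU_succ_or hz with hz | ⟨j, rfl⟩
      exacts [htail hz, hcol j]
    · exact hhT hz
  obtain ⟨A, hA⟩ := hC.elim_finite_subcover _
    (fun j => isOpen_ne_fun (continuous_eval_const _) continuous_const) hcover
  refine ⟨A, disjoint_left.2 fun h hhF hh => ?_⟩
  have hhC : h ∈ C := ⟨⟨hhF, fun z hz => hh (Or.inl hz)⟩,
    fun z hz => hh (Or.inr (image_mono subset_union_left hz))⟩
  obtain ⟨j, hj, hne⟩ := mem_iUnion₂.1 (hA hhC)
  exact hne (hh (Or.inr ⟨(n, j), Or.inr ⟨j, hj, rfl⟩, rfl⟩))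

theorem exists_columns_finite_disjoint {F : Set C(Fan, Y)} (hF : IsSeqClosed F) (hg₀ : g₀ ∉ F) :
    ∃ S : Set (ℕ × ℕ), (∀ m, {j | (m, j) ∈ S}.Finite) ∧
      ∀ n, Disjoint F {h | EqOn h g₀ (fanU n ∪ some '' S)} := by
  choose! A hA using fun n T => exists_finset_disjoint_succ g₀ hF (n := n) (T := T)
  let T : ℕ → Set (ℕ × ℕ) := fun n => Nat.rec ∅ (fun k Tk => Tk ∪ Prod.mk k '' A k Tk) n
  have hT (n : ℕ) : Disjoint F {h | EqOn h g₀ (fanU n ∪ some '' T n)} := by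
    induction n with
    | zero =>
      refine disjoint_left.2 fun h hhF hh => hg₀ ?_
      rwa [← ContinuousMap.ext fun z => hh (Or.inl (fanU_zero ▸ mem_univ z))]
    | succ n ih => exact hA n (T n) ih
  have hfin (n : ℕ) : (T n).Finite := by
    induction n with
    | zero => exact finite_empty
    | succ n ih => exact ih.union ((A n (T n)).finite_toSet.image _)
  -- stage `k` only adds points of column `k`, so column `m` of `⋃ n, T n` lies in `T (m + 1)`
  have hcol (n : ℕ) : ∀ p ∈ T n, p ∈ T (p.1 + 1) := by
    induction n with
    | zero => exact fun p hp => absurd hp (notMem_empty p)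
    | succ n ih =>
      rintro p (hp | ⟨j, hj, rfl⟩)
      exacts [ih p hp, Or.inr ⟨j, hj, rfl⟩]
  refine ⟨{p | p ∈ T (p.1 + 1)},
    fun m => ((hfin (m + 1)).preimage (Prod.mk_right_injective m).injOn :), fun n => (hT n).mono_right fun h hh => hh.mono ?_⟩
  exact union_subset_union_right _ (image_mono fun p hp => hcol n p hp)

instance : SequentialSpace C(Fan, Y) := by
  refine ⟨fun F hF => isOpen_compl_iff.1 <| isOpen_iff_mem_nhds.2 fun g₀ hg₀ => ?_⟩
  obtain ⟨S, hScol, hS⟩ := exists_columns_finite_disjoint g₀ hF hg₀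
  filter_upwards [(g₀.isOpen_setOf_eqOn (isCompact_insert_none hScol)).mem_nhds (eqOn_refl _ _)]
    with h hh hhF
  obtain ⟨n, hn⟩ := exists_eqOn_fanU h g₀ (hh (mem_insert _ _))
  exact disjoint_left.1 (hS n) hhF (hn.union (hh.mono (subset_insert _ _)))

end Fan

section NonIsolated

variable {X : Type*} [TopologicalSpace X]

variable (X) in
def nonIsolatedPoints : Set X := {x | ¬IsOpen ({x} : Set X)}

theorem countable_setOf_isOpen_singleton [SecondCountableTopology X] :
    {x : X | IsOpen ({x} : Set X)}.Countable :=
  (HereditarilyLindelofSpace.isLindelof _).countable_of_isDiscrete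
    (isDiscrete_of_isOpen_singleton fun _ hx => hx)

theorem weaklyLocallyCompactSpace_of_isCompact_mem_nhdsSet {C : Set X} (hC : IsCompact C)
    (hCX' : C ∈ 𝓝ˢ (nonIsolatedPoints X)) : WeaklyLocallyCompactSpace X :=
  ⟨fun x => by
    by_cases hx : IsOpen ({x} : Set X)
    exacts [⟨{x}, isCompact_singleton, hx.mem_nhds rfl⟩,
      ⟨C, hC, mem_nhdsSet_iff_forall.1 hCX' x hx⟩]⟩

theorem nonempty_nonIsolatedPoints (hnlc : ¬WeaklyLocallyCompactSpace X) :
    (nonIsolatedPoints X).Nonempty :=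
  nonempty_iff_ne_empty.2 fun h => hnlc <|
    weaklyLocallyCompactSpace_of_isCompact_mem_nhdsSet isCompact_empty (by simp [h])

theorem exists_infinite_diff_of_hasAntitoneBasis (hnlc : ¬WeaklyLocallyCompactSpace X)
    (hX' : IsCompact (nonIsolatedPoints X)) {W : ℕ → Set X}
    (hW : (𝓝ˢ (nonIsolatedPoints X)).HasAntitoneBasis W) (n : ℕ) :
    ∃ m ≥ n, (W m \ W (m + 1)).Infinite := by
  by_contra! hfin
  have hdiff (k : ℕ) : (W n \ W (n + k)).Finite := by
    induction k with
    | zero => simp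
    | succ k ih =>
      refine (ih.union (hfin (n + k) (Nat.le_add_right n k))).subset fun x ⟨hxn, hxk⟩ => ?_
      by_cases h : x ∈ W (n + k)
      exacts [Or.inr ⟨h, hxk⟩, Or.inl ⟨hxn, h⟩]
  refine hnlc (weaklyLocallyCompactSpace_of_isCompact_mem_nhdsSet ?_ (hW.mem n))
  refine isCompact_of_finite_diff hX' (subset_of_mem_nhdsSet (hW.mem n)) fun U hU hX'U => ?_
  obtain ⟨m, hm⟩ := hW.mem_iff.1 (hU.mem_nhdsSet.2 hX'U)
  exact (hdiff m).subset (sdiff_subset_sdiff_right ((hW.antitone (Nat.le_add_left m n)).trans hm))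

theorem exists_hasAntitoneBasis_infinite_diff [TopologicalSpace.PseudoMetrizableSpace X]
    (hnlc : ¬WeaklyLocallyCompactSpace X) (hX' : IsCompact (nonIsolatedPoints X)) :
    ∃ V : ℕ → Set X, (𝓝ˢ (nonIsolatedPoints X)).HasAntitoneBasis V ∧
      ∀ n, (V n \ V (n + 1)).Infinite := by
  have := hX'.isCountablyGenerated_nhdsSet
  obtain ⟨W, hW⟩ := (𝓝ˢ (nonIsolatedPoints X)).exists_antitone_basis
  have hP : {m | (W m \ W (m + 1)).Infinite}.Infinite := Nat.frequently_atTop_iff_infinite.1 <|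
    frequently_atTop.2 (exists_infinite_diff_of_hasAntitoneBasis hnlc hX' hW)
  have hσ := Nat.nth_strictMono hP
  refine ⟨W ∘ Nat.nth _, hW.comp_strictMono hσ, fun k => (Nat.nth_mem_of_infinite hP k).mono ?_⟩
  exact sdiff_subset_sdiff_right (hW.antitone (Nat.succ_le_of_lt (hσ (Nat.lt_succ_self k))))

theorem exists_level_of_hasAntitoneBasis [T1Space X] {V : ℕ → Set X}
    (hV : (𝓝ˢ (nonIsolatedPoints X)).HasAntitoneBasis V)
    (hinf : ∀ n, (V n \ V (n + 1)).Infinite) :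
    ∃ ℓ : {x : X // IsOpen ({x} : Set X)} → ℕ, (∀ k, (ℓ ⁻¹' {k}).Infinite) ∧
      comap (↑) (𝓝ˢ (nonIsolatedPoints X)) = comap ℓ atTop := by
  classical
  have hesc (x : X) (hx : IsOpen ({x} : Set X)) : ∃ n, x ∉ V (n + 1) := by
    obtain ⟨n, hn⟩ := hV.mem_iff.1 <| isOpen_compl_singleton.mem_nhdsSet.2
      fun y (hy : ¬IsOpen {y}) (hyx : y = x) => hy (hyx ▸ hx)
    exact ⟨n, fun h => hn (hV.antitone n.le_succ h) rfl⟩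
  -- the level of an isolated point `x` is the `k` with `x ∈ V k \ V (k + 1)`
  let ℓ (x : {x : X // IsOpen ({x} : Set X)}) : ℕ := Nat.find (hesc x.1 x.2)
  have hle (x) (n : ℕ) (hx : x.1 ∈ V n) : n ≤ ℓ x :=
    (Nat.le_find_iff _ _).2 fun _ hm hxm => hxm (hV.antitone hm hx)
  have hmem (x) (n : ℕ) (hx : n < ℓ x) : x.1 ∈ V (n + 1) :=
    not_not.1 ((Nat.lt_find_iff _ _).1 hx n le_rfl)
  refine ⟨ℓ, fun k => ?_, le_antisymm ?_ ?_⟩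
  · refine ((hinf k).preimage fun x hx => by_contra fun h => hx.2 ?_).mono
      fun x hx => le_antisymm (not_lt.1 fun h => hx.2 (hmem x k h)) (hle x k hx.1)
    exact subset_of_mem_nhdsSet (hV.mem (k + 1)) fun hx => h ⟨⟨x, hx⟩, rfl⟩
  · exact tendsto_iff_comap.1 <| tendsto_atTop.2 fun n =>
      mem_comap.2 ⟨V n, hV.mem n, fun x hx => hle x n hx⟩
  · exact tendsto_iff_comap.1 <| hV.toHasBasis.tendsto_right_iff.2 fun n _ =>
      mem_comap.2 ⟨Ici (n + 1), Ici_mem_atTop _, fun x hx => hV.antitone n.le_succ (hmem x n hx)⟩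

end NonIsolated

section Collapse

variable {X : Type*} [TopologicalSpace X]

open scoped Classical in
noncomputable def collapseToFan (τ : {x : X // IsOpen ({x} : Set X)} ≃ ℕ × ℕ) (x : X) : Fan :=
  (if hx : IsOpen ({x} : Set X) then some (τ ⟨x, hx⟩) else none : Option (ℕ × ℕ))

variable (τ : {x : X // IsOpen ({x} : Set X)} ≃ ℕ × ℕ)

theorem collapseToFan_eq_none_iff {x : X} :
    collapseToFan τ x = none ↔ x ∈ nonIsolatedPoints X := by
  by_cases hx : IsOpen ({x} : Set X)
  · rw [collapseToFan, dif_pos hx]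
    exact iff_of_false (Option.some_ne_none _) (not_not.2 hx)
  · rw [collapseToFan, dif_neg hx]
    exact iff_of_true rfl hx

theorem collapseToFan_eq_some_iff {x : X} {p : ℕ × ℕ} :
    collapseToFan τ x = some p ↔ x = τ.symm p := by
  by_cases hx : IsOpen ({x} : Set X)
  · rw [collapseToFan, dif_pos hx]
    exact Option.some_inj.trans (τ.eq_symm_apply.symm.trans Subtype.ext_iff)
  · rw [collapseToFan, dif_neg hx]
    exact iff_of_false (Option.some_ne_none p).symm fun h => hx (h ▸ (τ.symm p).2)

theorem collapseToFan_mem_fanU_iff {x : X} {n : ℕ} :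
    collapseToFan τ x ∈ fanU n ↔ ∀ hx : IsOpen ({x} : Set X), n ≤ (τ ⟨x, hx⟩).1 := by
  by_cases hx : IsOpen ({x} : Set X)
  · rw [collapseToFan, dif_pos hx]
    exact Fan.some_mem_fanU.trans ⟨fun h _ => h, fun h => h hx⟩
  · rw [collapseToFan, dif_neg hx]
    exact iff_of_true (Fan.none_mem_fanU n) fun h => absurd h hx

theorem eq_of_collapseToFan_eq {x x' : X} (h : collapseToFan τ x = collapseToFan τ x')
    (hne : collapseToFan τ x ≠ none) : x = x' := by
  obtain ⟨p, hp⟩ := Option.ne_none_iff_exists'.1 hne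
  exact ((collapseToFan_eq_some_iff τ).1 hp).trans
    ((collapseToFan_eq_some_iff τ).1 (h ▸ hp)).symm

theorem surjective_collapseToFan (hne : (nonIsolatedPoints X).Nonempty) :
    Surjective (collapseToFan τ)
  | none => ⟨hne.some, (collapseToFan_eq_none_iff τ).2 hne.some_mem⟩
  | some p => ⟨τ.symm p, (collapseToFan_eq_some_iff τ).2 rfl⟩

variable {τ}

theorem continuous_collapseToFan
    (hτ : comap (↑) (𝓝ˢ (nonIsolatedPoints X)) = comap (fun x => (τ x).1) atTop) :
    Continuous (collapseToFan τ) := by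
  refine continuous_iff_continuousAt.2 fun x => ?_
  by_cases hx : IsOpen ({x} : Set X)
  · exact continuousAt_of_isOpen_singleton hx
  rw [ContinuousAt, (collapseToFan_eq_none_iff τ).2 hx]
  refine Fan.hasAntitoneBasis_nhds_none.toHasBasis.tendsto_right_iff.2 fun n _ => ?_
  obtain ⟨t, ht, htn⟩ := mem_comap.1 (hτ ▸ preimage_mem_comap (Ici_mem_atTop n))
  filter_upwards [nhds_le_nhdsSet hx ht] with y hy
  exact (collapseToFan_mem_fanU_iff τ).2 fun hy' => @htn ⟨y, hy'⟩ hy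

theorem isClosedMap_collapseToFan
    (hτ : comap (↑) (𝓝ˢ (nonIsolatedPoints X)) = comap (fun x => (τ x).1) atTop) :
    IsClosedMap (collapseToFan τ) := by
  intro C hC
  refine isOpen_compl_iff.1 (isOpen_iff_mem_nhds.2 fun z hz => ?_)
  match z with
  | some p =>
    exact mem_of_superset ((Fan.isOpen_singleton_some p).mem_nhds rfl) (singleton_subset_iff.2 hz)
  | none =>
    have hCX' : Cᶜ ∈ 𝓝ˢ (nonIsolatedPoints X) := hC.isOpen_compl.mem_nhdsSet.2
      fun x hx hxC => hz ⟨x, hxC, (collapseToFan_eq_none_iff τ).2 hx⟩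
    obtain ⟨t, ht, htC⟩ := mem_comap.1 (hτ ▸ preimage_mem_comap hCX')
    obtain ⟨n, hn⟩ := mem_atTop_sets.1 ht
    refine mem_of_superset ((Fan.isOpen_fanU n).mem_nhds (Fan.none_mem_fanU n)) ?_
    rintro _ hz' ⟨x, hxC, rfl⟩
    by_cases hx : IsOpen ({x} : Set X)
    · exact htC (hn _ ((collapseToFan_mem_fanU_iff τ).1 hz' hx)) hxC
    · exact hz ⟨x, hxC, (collapseToFan_eq_none_iff τ).2 hx⟩

theorem isProperMap_collapseToFan
    (hτ : comap (↑) (𝓝ˢ (nonIsolatedPoints X)) = comap (fun x => (τ x).1) atTop)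
    (hX' : IsCompact (nonIsolatedPoints X)) :
    IsProperMap (collapseToFan τ) := by
  refine isProperMap_iff_isClosedMap_and_compact_fibers.2
    ⟨continuous_collapseToFan hτ, isClosedMap_collapseToFan hτ, fun z => ?_⟩
  match z with
  | none =>
    convert hX' using 1
    exact ext fun x => collapseToFan_eq_none_iff τ
  | some p =>
    convert isCompact_singleton (x := (τ.symm p : X)) using 1
    exact ext fun x => collapseToFan_eq_some_iff τ

theorem exists_equiv_prod_comap_eq [TopologicalSpace.MetrizableSpace X]
    [SecondCountableTopology X] (hnlc : ¬WeaklyLocallyCompactSpace X)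
    (hX' : IsCompact (nonIsolatedPoints X)) :
    ∃ τ : {x : X // IsOpen ({x} : Set X)} ≃ ℕ × ℕ,
      comap (↑) (𝓝ˢ (nonIsolatedPoints X)) = comap (fun x => (τ x).1) atTop := by
  obtain ⟨V, hV, hinf⟩ := exists_hasAntitoneBasis_infinite_diff hnlc hX'
  obtain ⟨ℓ, hfib, hℓ⟩ := exists_level_of_hasAntitoneBasis hV hinf
  have : Countable {x : X // IsOpen ({x} : Set X)} := countable_setOf_isOpen_singleton.to_subtype
  obtain ⟨τ, hτ⟩ := exists_equiv_prod_nat_fst_eq ℓ hfib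
  exact ⟨τ, hℓ.trans (congrArg (comap · atTop) (funext hτ).symm)⟩

end Collapse

theorem stmt14_general {X : Type*} [TopologicalSpace X] [PolishSpace X]
    (hnlc : ¬ WeaklyLocallyCompactSpace X)
    (hX' : IsCompact {x : X | ¬ IsOpen ({x} : Set X)}) :
    Nonempty
      (({f : C(X, Bool) | ∀ x, ¬ IsOpen ({x} : Set X) → f x = false} : Set C(X, Bool)) ≃ₜ
        ({g : C(Fan, Bool) | g none = false} : Set C(Fan, Bool))) ∧
    SequentialSpace C(X, Bool) := by
  obtain ⟨τ, hτ⟩ := exists_equiv_prod_comap_eq hnlc hX'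
  let q : C(X, Fan) := ⟨collapseToFan τ, continuous_collapseToFan hτ⟩
  let e := ((isProperMap_collapseToFan hτ hX').precompHomeomorph (q := q)
    (surjective_collapseToFan τ (nonempty_nonIsolatedPoints hnlc)) none false
    fun _ _ => eq_of_collapseToFan_eq τ).trans <| Homeomorph.setCongr <|
      ext fun f => forall_congr' fun x => imp_congr_left (collapseToFan_eq_none_iff τ)
  refine ⟨⟨e.symm⟩, ?_⟩
  have : SequentialSpace {g : C(Fan, Bool) | g none = false} :=
    (isClosed_eq (continuous_eval_const _) continuous_const).isClosedEmbedding_subtypeVal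
      |>.sequentialSpace
  have : SequentialSpace {f : C(X, Bool) | ∀ x, ¬IsOpen ({x} : Set X) → f x = false} :=
    e.isQuotientMap.sequentialSpace
  exact IsTopologicalAddGroup.sequentialSpace_of_isOpen
    (U := {f : C(X, Bool) | ∀ x, ¬IsOpen ({x} : Set X) → f x = false})
    (ContinuousMap.isOpen_setOfPred_mapsTo hX' (isOpen_discrete {false})) fun _ _ => rfl

theorem stmt14 {X : Type*} [TopologicalSpace X] [PolishSpace X]
    (hzd : ∀ (x : X) (U : Set X), IsOpen U → x ∈ U →
      ∃ V : Set X, IsClopen V ∧ x ∈ V ∧ V ⊆ U)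
    (hnlc : ¬ WeaklyLocallyCompactSpace X)
    (hX' : IsCompact {x : X | ¬ IsOpen ({x} : Set X)}) :
    Nonempty
      (({f : C(X, Bool) | ∀ x, ¬ IsOpen ({x} : Set X) → f x = false} : Set C(X, Bool)) ≃ₜ
        ({g : C(Fan, Bool) | g none = false} : Set C(Fan, Bool))) ∧
    SequentialSpace C(X, Bool) :=
  stmt14_general hnlc hX'
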